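/- For any f = c₁t+c₂t²+⋯ ∈ t·k[[t]] and any z ∈ kA[[λ]], one has Ψ_f(1/(1−λz)) = 1/(1−f_⋄(λz)) in k⟨A⟩[[λ]], i.e., Ψ_f(Σ_{n≥0} λⁿzⁿ) = Σ_{n≥0} (f_⋄(λz))ⁿ, where Ψ_f is applied coefficientwise (Ψ_f(λ)=λ), zⁿ and (f_⋄(λz))ⁿ denote concatenation powers, and f_⋄(λz) = Σ_{i≥1} λⁱ c_i z^{⋄i}. -/

import Mathlib

/-!
Setting (Hoffman–Ihara, "Quasi-shuffle products revisited"):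
`k` is a field containing `ℚ`, `A` a countable set of letters, `kA` the `k`-vector space
with basis `A` equipped with an associative commutative bilinear product `⋄` (given below as
a bilinear map `d`), and `k⟨A⟩` the noncommutative polynomial algebra on `A`, realized as
the monoid algebra of the free monoid of words on `A`.
-/

noncomputable section

open scoped BigOperators TensorProduct

section QuasiShuffle

variable (k A : Type*) [Field k] [CharZero k] [Countable A]

/-- `k⟨A⟩`, the noncommutative polynomial algebra on `A`: the `k`-vector space with basis
the words in `A`, with concatenation product and unit the empty word. -/
abbrev KAlg : Type _ := MonoidAlgebra k (FreeMonoid A)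

/-- `kA`, the `k`-vector space with basis `A`. -/
abbrev KA : Type _ := A →₀ k

variable {k A}

/-- The basis element of `k⟨A⟩` corresponding to a word. -/
def word (w : List A) : KAlg k A := MonoidAlgebra.of k (FreeMonoid A) (FreeMonoid.ofList w)

/-- Linear extension to `k⟨A⟩` of a function defined on words. -/
def liftW {N : Type*} [AddCommMonoid N] [Module k N] (g : List A → N) :
    KAlg k A →ₗ[k] N :=
  (Finsupp.lsum k fun w => LinearMap.toSpanSingleton k N (g (FreeMonoid.toList w))) ∘ₗ
    (MonoidAlgebra.coeffLinearEquiv k).toLinearMap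

/-- The inclusion of `kA` into `k⟨A⟩` (letters as one-letter words). -/
def incl : KA k A →ₗ[k] KAlg k A :=
  Finsupp.lsum k fun a => LinearMap.toSpanSingleton k (KAlg k A) (word [a])

/-- The `⋄`-product (via the bilinear map `d` on `kA`) of the letters of a word, as an
element of `kA`; `0` for the empty word. -/
def dChunk (d : KA k A →ₗ[k] KA k A →ₗ[k] KA k A) : List A → KA k A
  | [] => 0
  | a :: t => t.foldl (fun x b => d x (Finsupp.single b 1)) (Finsupp.single a 1)

/-- `I[w]`: for a composition `I` of the length of the word `w`, the concatenation product
of the `⋄`-products of the blocks of `w` determined by `I`. -/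
def IW (d : KA k A →ₗ[k] KA k A →ₗ[k] KA k A) (w : List A) (I : Composition w.length) :
    KAlg k A :=
  ((w.splitWrtComposition I).map fun ch => incl (dChunk d ch)).prod

/-- The linear map `Ψ_f` on `k⟨A⟩` associated to a power series `f = Σ_{n≥1} c_n tⁿ`,
where `c : ℕ → k` records the coefficients:
`Ψ_f(w) = Σ_{I composition of ℓ(w)} c_{i₁} ⋯ c_{i_m} I[w]`. -/
def Psi (d : KA k A →ₗ[k] KA k A →ₗ[k] KA k A) (c : ℕ → k) : KAlg k A →ₗ[k] KAlg k A :=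
  liftW fun w => ∑ I : Composition w.length, (I.blocks.map c).prod • IW d w I

/-- The extension of `⋄` to a product on `k⟨A⟩`, on basis words:
`1⋄v = v`, `u⋄1 = u`, and `(u'a)⋄(bv') = u'(a⋄b)v'`. -/
def dmWord (d : KA k A →ₗ[k] KA k A →ₗ[k] KA k A) (u v : List A) : KAlg k A :=
  match u.getLast?, v.head? with
  | none, _ => word v
  | some _, none => word u
  | some a, some b =>
      word u.dropLast * incl (d (Finsupp.single a 1) (Finsupp.single b 1)) * word v.tail

/-- The extension of `⋄` to a bilinear (associative, noncommutative) product on `k⟨A⟩`. -/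
def dm (d : KA k A →ₗ[k] KA k A →ₗ[k] KA k A) :
    KAlg k A →ₗ[k] KAlg k A →ₗ[k] KAlg k A :=
  (Finsupp.lsum k fun u => LinearMap.toSpanSingleton k (KAlg k A →ₗ[k] KAlg k A)
    (liftW fun v => dmWord d (FreeMonoid.toList u) v)) ∘ₗ
    (MonoidAlgebra.coeffLinearEquiv k).toLinearMap

variable (k A) in
/-- `k⟨A⟩[[λ]]`: formal power series in a formal parameter `λ` with coefficients in
`k⟨A⟩`; its ring product is coefficientwise convolution with respect to the
concatenation product. -/
abbrev KSer : Type _ := PowerSeries (KAlg k A)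

/-- Multiplication by the formal parameter `λ` on `k⟨A⟩[[λ]]`. -/
def lamS (F : KSer k A) : KSer k A :=
  PowerSeries.mk fun n => if n = 0 then 0 else PowerSeries.coeff (R := KAlg k A) (n - 1) F

/-- Coefficientwise scalar multiplication by an element of `k` on `k⟨A⟩[[λ]]`. -/
def smulS (r : k) (F : KSer k A) : KSer k A :=
  PowerSeries.mk fun n => r • PowerSeries.coeff (R := KAlg k A) n F

/-- `1/(1-u) = Σ_{n≥0} uⁿ` with concatenation powers (each coefficient is a finite sum,
since in all uses `u` has zero constant term). -/
def geomS (F : KSer k A) : KSer k A :=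
  PowerSeries.mk fun n => ∑ i ∈ Finset.range (n + 1), PowerSeries.coeff (R := KAlg k A) n (F ^ i)

/-- Apply a linear map on `k⟨A⟩` coefficientwise to an element of `k⟨A⟩[[λ]]`. -/
def mapS (L : KAlg k A →ₗ[k] KAlg k A) (F : KSer k A) : KSer k A :=
  PowerSeries.mk fun n => L (PowerSeries.coeff (R := KAlg k A) n F)

/-- The coefficientwise extension to `k⟨A⟩[[λ]]` of a bilinear product on `k⟨A⟩`. -/
def mul2S (m : KAlg k A →ₗ[k] KAlg k A →ₗ[k] KAlg k A) (F G : KSer k A) : KSer k A :=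
  PowerSeries.mk fun n => ∑ i ∈ Finset.range (n + 1),
    m (PowerSeries.coeff (R := KAlg k A) i F) (PowerSeries.coeff (R := KAlg k A) (n - i) G)

/-- Powers of a series under (the coefficientwise extension of) a bilinear product `m`
on `k⟨A⟩` (such as `*`, `⋆` or `⋄`), with `0`-th power `1`. -/
def powS (m : KAlg k A →ₗ[k] KAlg k A →ₗ[k] KAlg k A) (F : KSer k A) : ℕ → KSer k A
  | 0 => 1
  | n + 1 => mul2S m F (powS m F n)

/-- An element `z ∈ kA[[λ]]`, given by its coefficients `z : ℕ → kA`, viewed in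
`k⟨A⟩[[λ]]`. -/
def zSer (z : ℕ → KA k A) : KSer k A :=
  PowerSeries.mk fun n => incl (z n)

/-- `f_⋄(F) = Σ_{i≥1} c_i F^{⋄i}` for `F ∈ λ·k⟨A⟩[[λ]]`, where `c : ℕ → k` records the
coefficients of `f ∈ t·k[[t]]` (each coefficient of `λⁿ` is a finite sum since `F^{⋄i}`
has order at least `i`). -/
def fDiamondS (d : KA k A →ₗ[k] KA k A →ₗ[k] KA k A) (c : ℕ → k) (F : KSer k A) :
    KSer k A :=
  PowerSeries.mk fun n => ∑ i ∈ Finset.Icc 1 n,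
    c i • PowerSeries.coeff (R := KAlg k A) n (powS (dm d) F i)


set_option linter.unusedSectionVars false

lemma liftW_word {N : Type*} [AddCommMonoid N] [Module k N] (g : List A → N) (w : List A) :
    liftW (k := k) g (word w) = g w := by
  have : MonoidAlgebra.coeffLinearEquiv k (word w : KAlg k A)
      = Finsupp.single (FreeMonoid.ofList w) (1:k) := rfl
  rw [liftW, LinearMap.comp_apply, LinearEquiv.coe_coe, this]
  erw [Finsupp.lsum_single]
  simp

lemma incl_single (a : A) : incl (Finsupp.single a (1:k)) = word [a] := by
  simp [incl]

lemma word_nil : (word ([] : List A) : KAlg k A) = 1 := rfl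

lemma word_mul (u v : List A) : (word u : KAlg k A) * word v = word (u ++ v) := by
  simp [word, ← map_mul]


def comps : ℕ → Finset (List ℕ)
  | 0 => {[]}
  | (n+1) => (Finset.range (n+1)).attach.biUnion
      (fun q => (comps q.1).image (fun l => (n+1-q.1) :: l))
decreasing_by
  have := q.2; simp only [Finset.mem_range] at this; omega

lemma comps_zero : comps 0 = {[]} := by rw [comps]

lemma mem_comps : ∀ (n : ℕ) (l : List ℕ), l ∈ comps n ↔ l.sum = n ∧ ∀ i ∈ l, 0 < i := by
  intro n
  induction n using Nat.strong_induction_on with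
  | _ n ih =>
    intro l
    match n with
    | 0 =>
      rw [comps]
      simp only [Finset.mem_singleton]
      constructor
      · rintro rfl; simp
      · rintro ⟨hs, hp⟩
        cases l with
        | nil => rfl
        | cons a t =>
          exfalso
          have : 0 < a := hp a (by simp)
          simp at hs; omega
    | n + 1 =>
      rw [comps]
      simp only [Finset.mem_biUnion, Finset.mem_attach, Finset.mem_image, true_and,
        Subtype.exists, Finset.mem_range]
      constructor
      · rintro ⟨q, hq, l', hl', rfl⟩
        rw [ih q hq] at hl'
        refine ⟨by simp [hl'.1]; omega, ?_⟩
        intro i hi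
        rcases List.mem_cons.1 hi with rfl | hi
        · omega
        · exact hl'.2 i hi
      · rintro ⟨hs, hp⟩
        cases l with
        | nil => simp at hs
        | cons m t =>
          have hm : 0 < m := hp m (by simp)
          have hm2 : m ≤ n + 1 := by simp at hs; omega
          refine ⟨n + 1 - m, by omega, t, ?_, ?_⟩
          · rw [ih (n+1-m) (by omega)]
            refine ⟨by simp at hs ⊢; omega, fun i hi => hp i (by simp [hi])⟩
          · congr 1; omega

lemma sum_comps_succ {M : Type*} [AddCommMonoid M] (n : ℕ) (f : List ℕ → M) :
    ∑ l ∈ comps (n+1), f l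
      = ∑ j ∈ Finset.Icc 1 (n+1), ∑ l ∈ comps (n+1-j), f (j :: l) := by
  rw [comps]
  rw [Finset.sum_biUnion]
  · rw [Finset.sum_attach (Finset.range (n+1))
      (fun q => ∑ l ∈ (comps q).image (fun l => (n+1-q) :: l), f l)]
    rw [Finset.sum_nbij' (i := fun q => n+1-q) (j := fun j => n+1-j)
      (s := Finset.range (n+1)) (t := Finset.Icc 1 (n+1))]
    · intro q hq; simp at hq ⊢; omega
    · intro j hj; simp at hj ⊢; omega
    · intro q hq; simp at hq ⊢; omega
    · intro j hj; simp at hj ⊢; omega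
    · intro q hq
      rw [Finset.sum_image]
      · simp at hq
        have : n + 1 - (n + 1 - q) = q := by omega
        rw [this]
      · intro x _ y _ h; exact (List.cons.injEq _ _ _ _ ▸ h).2
  · intro q _ q' _ hqq'
    simp only [Function.onFun]
    rw [Finset.disjoint_left]
    intro l hl hl'
    simp only [Finset.mem_image] at hl hl'
    obtain ⟨l1, _, rfl⟩ := hl
    obtain ⟨l2, _, h2⟩ := hl'
    apply hqq'
    have hq := q.2; have hq' := q'.2
    simp only [Finset.mem_range] at hq hq'
    have : n + 1 - q'.1 = n + 1 - q.1 := (List.cons.injEq _ _ _ _ ▸ h2).1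
    exact Subtype.ext (by omega)

lemma sum_comps_pos {M : Type*} [AddCommMonoid M] (n : ℕ) (hn : 1 ≤ n) (f : List ℕ → M) :
    ∑ l ∈ comps n, f l
      = ∑ j ∈ Finset.Icc 1 n, ∑ l ∈ comps (n-j), f (j :: l) := by
  obtain ⟨m, rfl⟩ : ∃ m, n = m + 1 := ⟨n - 1, by omega⟩
  exact sum_comps_succ m f

section Chunk3

variable {k A : Type*} [Field k] [CharZero k] [Countable A]
variable (d : KA k A →ₗ[k] KA k A →ₗ[k] KA k A) (c : ℕ → k)

/-- take/drop version of `splitWrtCompositionAux`. -/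
def splitl {B : Type*} : List B → List ℕ → List (List B)
  | _, [] => []
  | w, (j :: l) => w.take j :: splitl (w.drop j) l

lemma splitWrtCompositionAux_eq_splitl {B : Type*} (w : List B) (l : List ℕ) :
    List.splitWrtCompositionAux w l = splitl w l := by
  induction l generalizing w with
  | nil => rfl
  | cons j l ih => rw [List.splitWrtCompositionAux_cons, splitl, ih]

lemma Psi_word (w : List A) :
    Psi d c (word w) = ∑ l ∈ comps w.length,
      ((l.map c).prod) • ((splitl w l).map (fun ch => incl (dChunk d ch))).prod := by
  rw [Psi, liftW_word]
  refine Finset.sum_bij (fun I _ => I.blocks) ?_ ?_ ?_ ?_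
  · intro I _
    exact (mem_comps _ _).2 ⟨I.blocks_sum, fun i h => I.blocks_pos h⟩
  · intro I _ I' _ h
    exact Composition.ext h
  · intro l hl
    rw [mem_comps] at hl
    exact ⟨⟨l, fun h => hl.2 _ h, hl.1⟩, Finset.mem_univ _, rfl⟩
  · intro I _
    rw [IW, List.splitWrtComposition, splitWrtCompositionAux_eq_splitl]

lemma Psi_one : Psi d c (1 : KAlg k A) = 1 := by
  rw [← word_nil, Psi_word]
  simp [comps_zero, splitl, word_nil]

lemma Psi_word_cons (a : A) (w : List A) :
    Psi d c (word (a :: w)) = ∑ j ∈ Finset.Icc 1 (w.length + 1),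
      c j • (incl (dChunk d ((a::w).take j)) * Psi d c (word ((a::w).drop j))) := by
  rw [Psi_word]
  rw [show (a::w).length = w.length + 1 from rfl, sum_comps_succ]
  refine Finset.sum_congr rfl fun j hj => ?_
  rw [Psi_word]
  have hd : ((a::w).drop j).length = w.length + 1 - j := by simp
  rw [hd, Finset.mul_sum, Finset.smul_sum]
  refine Finset.sum_congr rfl fun l' hl' => ?_
  rw [splitl]
  simp only [List.map_cons, List.prod_cons]
  rw [mul_smul_comm, smul_smul]

end Chunk3

section Chunk4

variable {k A : Type*} [Field k] [CharZero k] [Countable A]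
variable (d : KA k A →ₗ[k] KA k A →ₗ[k] KA k A) (c : ℕ → k)

/-- The `⋄`-product of a list of elements of `kA` (0 for the empty list). -/
def chP : List (KA k A) → KA k A
  | [] => 0
  | x :: t => t.foldl (fun y u => d y u) x

/-- Product in `k⟨A⟩` of the inclusions of a list of elements of `kA`. -/
def iP (T : List (KA k A)) : KAlg k A := (T.map (fun x => incl x)).prod

lemma chP_cons (x : KA k A) (t : List (KA k A)) :
    chP d (x :: t) = t.foldl (fun y u => d y u) x := rfl

lemma iP_nil : iP ([] : List (KA k A)) = 1 := rfl

lemma iP_cons (x : KA k A) (T : List (KA k A)) : iP (x :: T) = incl x * iP T := by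
  simp [iP]

lemma iP_append (S T : List (KA k A)) : iP (S ++ T) = iP S * iP T := by
  simp [iP]

lemma iP_singles (w : List A) :
    iP (w.map (fun a => Finsupp.single a (1:k))) = word w := by
  induction w with
  | nil => rfl
  | cons a t ih => rw [List.map_cons, iP_cons, ih, incl_single, word_mul]; rfl

lemma foldl_d_zero : ∀ (l : List (KA k A)), l.foldl (fun y u => d y u) 0 = 0
  | [] => rfl
  | u :: t => by
      have : d (0 : KA k A) u = 0 := by rw [map_zero]; rfl
      rw [List.foldl_cons, this, foldl_d_zero]

lemma foldl_d_add (l : List (KA k A)) : ∀ (x y : KA k A),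
    l.foldl (fun y u => d y u) (x + y)
      = l.foldl (fun y u => d y u) x + l.foldl (fun y u => d y u) y := by
  induction l with
  | nil => intro x y; rfl
  | cons u t ih =>
      intro x y
      have : d (x + y) u = d x u + d y u := by rw [map_add]; rfl
      rw [List.foldl_cons, this, ih]; rfl

lemma foldl_d_smul (l : List (KA k A)) : ∀ (r : k) (x : KA k A),
    l.foldl (fun y u => d y u) (r • x) = r • l.foldl (fun y u => d y u) x := by
  induction l with
  | nil => intro r x; rfl
  | cons u t ih =>
      intro r x
      have : d (r • x) u = r • d x u := by rw [map_smul]; rfl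
      rw [List.foldl_cons, this, ih]; rfl

lemma chP_singles (w : List A) :
    chP d (w.map (fun a => Finsupp.single a (1:k))) = dChunk d w := by
  cases w with
  | nil => rfl
  | cons a t => simp [chP, dChunk, List.foldl_map]

/-- `chP` of a list with one entry replaced by `0` is `0`. -/
lemma chP_zero_entry (pre post : List (KA k A)) :
    chP d (pre ++ (0 : KA k A) :: post) = 0 := by
  cases pre with
  | nil => simpa [chP] using foldl_d_zero d post
  | cons p p' =>
      simp only [List.cons_append, chP_cons, List.foldl_append, List.foldl_cons]
      rw [map_zero, foldl_d_zero]

lemma chP_add_entry (pre post : List (KA k A)) (x y : KA k A) :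
    chP d (pre ++ (x + y) :: post) = chP d (pre ++ x :: post) + chP d (pre ++ y :: post) := by
  cases pre with
  | nil => simpa [chP] using foldl_d_add d post x y
  | cons p p' =>
      simp only [List.cons_append, chP_cons, List.foldl_append, List.foldl_cons]
      rw [map_add, foldl_d_add]

lemma chP_smul_entry (pre post : List (KA k A)) (r : k) (x : KA k A) :
    chP d (pre ++ (r • x) :: post) = r • chP d (pre ++ x :: post) := by
  cases pre with
  | nil => simpa [chP] using foldl_d_smul d post r x
  | cons p p' =>
      simp only [List.cons_append, chP_cons, List.foldl_append, List.foldl_cons]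
      rw [map_smul, foldl_d_smul]

lemma take_mid_le {B : Type*} (pre : List B) (x : B) (post : List B) {j : ℕ}
    (h : j ≤ pre.length) : (pre ++ x :: post).take j = pre.take j := by
  simp [List.take_append, Nat.sub_eq_zero_of_le h]

lemma drop_mid_le {B : Type*} (pre : List B) (x : B) (post : List B) {j : ℕ}
    (h : j ≤ pre.length) : (pre ++ x :: post).drop j = pre.drop j ++ x :: post := by
  simp [List.drop_append, Nat.sub_eq_zero_of_le h]

lemma take_mid_gt {B : Type*} (pre : List B) (x : B) (post : List B) {j : ℕ}
    (h : pre.length < j) :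
    (pre ++ x :: post).take j = pre ++ x :: post.take (j - pre.length - 1) := by
  obtain ⟨t, ht⟩ : ∃ t, j - pre.length = t + 1 := ⟨j - pre.length - 1, by omega⟩
  rw [List.take_append, List.take_of_length_le (by omega), ht]
  simp [show j - pre.length - 1 = t by omega]

lemma drop_mid_gt {B : Type*} (pre : List B) (x : B) (post : List B) {j : ℕ}
    (h : pre.length < j) :
    (pre ++ x :: post).drop j = post.drop (j - pre.length - 1) := by
  obtain ⟨t, ht⟩ : ∃ t, j - pre.length = t + 1 := ⟨j - pre.length - 1, by omega⟩
  rw [List.drop_append, List.drop_of_length_le (by omega), ht]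
  simp [show j - pre.length - 1 = t by omega]

/-- Span induction over lists of elements of `kA`. -/
lemma list_span_induction (Q : List (KA k A) → Prop)
    (hbasis : ∀ w : List A, Q (w.map (fun a => Finsupp.single a (1:k))))
    (hzero : ∀ pre post, Q (pre ++ (0 : KA k A) :: post))
    (hadd : ∀ pre post (x y : KA k A),
      Q (pre ++ x :: post) → Q (pre ++ y :: post) → Q (pre ++ (x + y) :: post))
    (hsmul : ∀ pre post (r : k) (x : KA k A), Q (pre ++ x :: post) → Q (pre ++ (r • x) :: post)) :
    ∀ T, Q T := by
  have key : ∀ (T : List (KA k A)) (pre : List A),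
      Q ((pre.map (fun a => Finsupp.single a (1:k))) ++ T) := by
    intro T
    induction T with
    | nil => intro pre; simpa using hbasis pre
    | cons x T ih =>
        intro pre
        induction x using Finsupp.induction with
        | zero => exact hzero _ _
        | single_add a b f haf hb hf =>
            refine hadd _ _ _ _ ?_ hf
            have h1 : Q ((pre.map (fun a => Finsupp.single a (1:k)))
                ++ (Finsupp.single a (1:k)) :: T) := by
              have := ih (pre ++ [a])
              simpa using this
            have := hsmul _ _ b _ h1
            simpa [Finsupp.smul_single] using this
  intro T
  simpa using key T []

end Chunk4

section Chunk5

variable {k A : Type*} [Field k] [CharZero k] [Countable A]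
variable (d : KA k A →ₗ[k] KA k A →ₗ[k] KA k A) (c : ℕ → k)

/-- One term of the first-block splitting of `Ψ`. -/
def zterm (T : List (KA k A)) (j : ℕ) : KAlg k A :=
  c j • (incl (chP d (T.take j)) * Psi d c (iP (T.drop j)))

lemma zterm_zero (pre post : List (KA k A)) (j : ℕ) :
    zterm d c (pre ++ (0:KA k A) :: post) j = 0 := by
  rcases le_or_gt j pre.length with h | h
  · rw [zterm, drop_mid_le _ _ _ h, iP_append, iP_cons]
    simp
  · rw [zterm, take_mid_gt _ _ _ h, chP_zero_entry]
    simp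

lemma zterm_add (pre post : List (KA k A)) (x y : KA k A) (j : ℕ) :
    zterm d c (pre ++ (x + y) :: post) j
      = zterm d c (pre ++ x :: post) j + zterm d c (pre ++ y :: post) j := by
  rcases le_or_gt j pre.length with h | h
  · rw [zterm, zterm, zterm, take_mid_le _ _ _ h, take_mid_le _ _ _ h, take_mid_le _ _ _ h,
      drop_mid_le _ _ _ h, drop_mid_le _ _ _ h, drop_mid_le _ _ _ h]
    simp only [iP_append, iP_cons, map_add, add_mul, mul_add, smul_add]
  · rw [zterm, zterm, zterm, take_mid_gt _ _ _ h, take_mid_gt _ _ _ h, take_mid_gt _ _ _ h,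
      drop_mid_gt _ _ _ h, drop_mid_gt _ _ _ h, drop_mid_gt _ _ _ h, chP_add_entry]
    simp only [map_add, add_mul, smul_add]

lemma zterm_smul (pre post : List (KA k A)) (r : k) (x : KA k A) (j : ℕ) :
    zterm d c (pre ++ (r • x) :: post) j = r • zterm d c (pre ++ x :: post) j := by
  rcases le_or_gt j pre.length with h | h
  · rw [zterm, zterm, take_mid_le _ _ _ h, take_mid_le _ _ _ h,
      drop_mid_le _ _ _ h, drop_mid_le _ _ _ h]
    simp only [iP_append, iP_cons, map_smul, smul_mul_assoc, mul_smul_comm]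
    rw [smul_comm]
  · rw [zterm, zterm, take_mid_gt _ _ _ h, take_mid_gt _ _ _ h,
      drop_mid_gt _ _ _ h, drop_mid_gt _ _ _ h, chP_smul_entry]
    simp only [map_smul, smul_mul_assoc]
    rw [smul_comm]

/-- First-block splitting of `Ψ` on a product of elements of `kA`. -/
lemma Psi_iP_split : ∀ (T : List (KA k A)), T ≠ [] →
    Psi d c (iP T) = ∑ j ∈ Finset.Icc 1 T.length, zterm d c T j := by
  refine list_span_induction
    (fun T => T ≠ [] → Psi d c (iP T) = ∑ j ∈ Finset.Icc 1 T.length, zterm d c T j)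
    ?_ ?_ ?_ ?_
  · intro w hw
    have hw' : w ≠ [] := by
      intro h; exact hw (by simp [h])
    obtain ⟨a, w', rfl⟩ : ∃ a w', w = a :: w' := by
      cases w with
      | nil => exact absurd rfl hw'
      | cons a w' => exact ⟨a, w', rfl⟩
    rw [iP_singles, Psi_word_cons]
    have hlen : ((a :: w').map (fun a => Finsupp.single a (1:k))).length = w'.length + 1 := by
      simp
    rw [hlen]
    refine Finset.sum_congr rfl fun j hj => ?_
    rw [zterm, ← List.map_take, ← List.map_drop, chP_singles, iP_singles]
  · intro pre post _
    rw [iP_append, iP_cons]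
    simp only [map_zero, zero_mul, mul_zero]
    exact (Finset.sum_eq_zero fun j _ => zterm_zero d c pre post j).symm
  · intro pre post x y hx hy _
    have hxne : pre ++ x :: post ≠ [] := by simp
    have hyne : pre ++ y :: post ≠ [] := by simp
    have hlen : ∀ u : KA k A, (pre ++ u :: post).length = pre.length + post.length + 1 := by
      intro u; simp; omega
    rw [iP_append, iP_cons, map_add, add_mul, mul_add, map_add]
    rw [show iP pre * (incl x * iP post) = iP (pre ++ x :: post) by rw [iP_append, iP_cons]]
    rw [show iP pre * (incl y * iP post) = iP (pre ++ y :: post) by rw [iP_append, iP_cons]]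
    rw [hx hxne, hy hyne]
    simp only [hlen]
    rw [← Finset.sum_add_distrib]
    exact (Finset.sum_congr rfl fun j _ => zterm_add d c pre post x y j).symm
  · intro pre post r x hx _
    have hxne : pre ++ x :: post ≠ [] := by simp
    have hlen : ∀ u : KA k A, (pre ++ u :: post).length = pre.length + post.length + 1 := by
      intro u; simp; omega
    rw [iP_append, iP_cons, map_smul, smul_mul_assoc, mul_smul_comm, map_smul]
    rw [show iP pre * (incl x * iP post) = iP (pre ++ x :: post) by rw [iP_append, iP_cons]]
    rw [hx hxne]
    simp only [hlen]
    rw [Finset.smul_sum]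
    exact (Finset.sum_congr rfl fun j _ => zterm_smul d c pre post r x j).symm

end Chunk5

section Chunk6

variable {M : Type*} [AddCommMonoid M]

lemma sum_Icc_one_succ (L : ℕ) (F : ℕ → M) :
    ∑ j ∈ Finset.Icc 1 (L+1), F j = F 1 + ∑ t ∈ Finset.Icc 1 L, F (t+1) := by
  induction L with
  | zero => simp
  | succ L ihL =>
      rw [Finset.sum_Icc_succ_top (by omega : 1 ≤ L + 1 + 1), ihL,
        Finset.sum_Icc_succ_top (by omega : 1 ≤ L + 1), add_assoc]

lemma sum_Icc_zero_bot (K : ℕ) (F : ℕ → M) :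
    ∑ j ∈ Finset.Icc 0 K, F j = F 0 + ∑ j ∈ Finset.Icc 1 K, F j := by
  rw [show Finset.Icc 0 K = insert 0 (Finset.Icc 1 K) by
    ext x; simp only [Finset.mem_Icc, Finset.mem_insert]; omega]
  rw [Finset.sum_insert (by simp)]

lemma split_rhs (n : ℕ) (h : List ℕ → List ℕ → M) :
    ∑ q ∈ Finset.Icc 1 (n+1), ∑ l₁ ∈ comps q, ∑ l₂ ∈ comps (n+1-q), h l₁ l₂
      = ∑ m ∈ Finset.Icc 1 (n+1), ((∑ l'' ∈ comps (n+1-m), h [m] l'')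
          + ∑ q' ∈ Finset.Icc 1 (n+1-m), ∑ l₁ ∈ comps q', ∑ l₂ ∈ comps (n+1-m-q'),
              h (m :: l₁) l₂) := by
  calc
    ∑ q ∈ Finset.Icc 1 (n+1), ∑ l₁ ∈ comps q, ∑ l₂ ∈ comps (n+1-q), h l₁ l₂
      = ∑ q ∈ Finset.Icc 1 (n+1), ∑ m ∈ Finset.Icc 1 q, ∑ l₁' ∈ comps (q-m),
          ∑ l₂ ∈ comps (n+1-q), h (m :: l₁') l₂ :=
        Finset.sum_congr rfl fun q hq => sum_comps_pos q (Finset.mem_Icc.1 hq).1 _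
    _ = ∑ m ∈ Finset.Icc 1 (n+1), ∑ q ∈ Finset.Icc m (n+1), ∑ l₁' ∈ comps (q-m),
          ∑ l₂ ∈ comps (n+1-q), h (m :: l₁') l₂ :=
        Finset.sum_comm' (by intro q m; simp only [Finset.mem_Icc]; omega)
    _ = _ := Finset.sum_congr rfl fun m hm => ?_
  have hm' := Finset.mem_Icc.1 hm
  have e : (∑ q ∈ Finset.Icc m (n+1), ∑ l₁' ∈ comps (q-m), ∑ l₂ ∈ comps (n+1-q), h (m::l₁') l₂)
      = ∑ q'' ∈ Finset.Icc 0 (n+1-m), ∑ l₁' ∈ comps q'', ∑ l₂ ∈ comps (n+1-m-q''),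
          h (m::l₁') l₂ := by
    rw [show Finset.Icc m (n+1) = Finset.image (· + m) (Finset.Icc 0 (n+1-m)) by
      ext x
      simp only [Finset.mem_image, Finset.mem_Icc]
      constructor
      · intro hx; exact ⟨x - m, by omega, by omega⟩
      · rintro ⟨a, ha, rfl⟩; omega]
    rw [Finset.sum_image (by intro a _ b _ hab; simp only at hab; omega)]
    refine Finset.sum_congr rfl fun q'' hq'' => ?_
    simp only [Finset.mem_Icc] at hq''
    rw [show q'' + m - m = q'' by omega, show n+1-(q''+m) = n+1-m-q'' by omega]
  rw [e, sum_Icc_zero_bot]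
  congr 1
  rw [comps_zero]
  simp

lemma split_sum : ∀ (N : ℕ) (h : List ℕ → List ℕ → M),
    ∑ l ∈ comps N, ∑ j ∈ Finset.Icc 1 l.length, h (l.take j) (l.drop j)
      = ∑ q ∈ Finset.Icc 1 N, ∑ l₁ ∈ comps q, ∑ l₂ ∈ comps (N - q), h l₁ l₂ := by
  intro N
  induction N using Nat.strong_induction_on with
  | _ N ih =>
    intro h
    rcases N with _ | n
    · simp [comps_zero]
    · rw [sum_comps_succ]
      have lhs_inner : ∀ m ∈ Finset.Icc 1 (n+1), ∀ l'' : List ℕ,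
          (∑ j ∈ Finset.Icc 1 ((m :: l'').length), h ((m::l'').take j) ((m::l'').drop j))
            = h [m] l'' + ∑ t ∈ Finset.Icc 1 l''.length, h (m :: l''.take t) (l''.drop t) := by
        intro m _ l''
        rw [show (m :: l'').length = l''.length + 1 from rfl, sum_Icc_one_succ]
        simp only [List.take_succ_cons, List.drop_succ_cons, List.take_zero, List.drop_zero]
      rw [split_rhs n h]
      refine Finset.sum_congr rfl fun m hm => ?_
      have hm1 : 1 ≤ m := (Finset.mem_Icc.1 hm).1
      calc
        ∑ l'' ∈ comps (n+1-m),
            ∑ j ∈ Finset.Icc 1 ((m :: l'').length), h ((m::l'').take j) ((m::l'').drop j)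
          = ∑ l'' ∈ comps (n+1-m), (h [m] l''
              + ∑ t ∈ Finset.Icc 1 l''.length, h (m :: l''.take t) (l''.drop t)) :=
            Finset.sum_congr rfl fun l'' _ => lhs_inner m hm l''
        _ = (∑ l'' ∈ comps (n+1-m), h [m] l'')
              + ∑ l'' ∈ comps (n+1-m), ∑ t ∈ Finset.Icc 1 l''.length,
                  h (m :: l''.take t) (l''.drop t) := Finset.sum_add_distrib
        _ = (∑ l'' ∈ comps (n+1-m), h [m] l'')
              + ∑ q' ∈ Finset.Icc 1 (n+1-m), ∑ l₁ ∈ comps q', ∑ l₂ ∈ comps (n+1-m-q'),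
                  h (m :: l₁) l₂ := by
            rw [ih (n+1-m) (by omega) (fun a b => h (m :: a) b)]

end Chunk6

section Chunk7

variable {k A : Type*} [Field k] [CharZero k] [Countable A]
variable (d : KA k A →ₗ[k] KA k A →ₗ[k] KA k A) (c : ℕ → k) (z : ℕ → KA k A)

lemma sum_range_succ_bot {M : Type*} [AddCommMonoid M] (K : ℕ) (F : ℕ → M) :
    ∑ j ∈ Finset.range (K+1), F j = F 0 + ∑ j ∈ Finset.Icc 1 K, F j := by
  rw [show Finset.range (K+1) = Finset.Icc 0 K by ext x; simp, sum_Icc_zero_bot]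

lemma coeff_pow_eq_zero {F : KSer k A}
    (hF : PowerSeries.coeff (R := KAlg k A) 0 F = 0) :
    ∀ (i m : ℕ), m < i → PowerSeries.coeff (R := KAlg k A) m (F ^ i) = 0 := by
  intro i
  induction i with
  | zero => intro m hm; omega
  | succ i ih =>
      intro m hm
      rw [pow_succ, PowerSeries.coeff_mul]
      apply Finset.sum_eq_zero
      rintro ⟨a, b⟩ hab
      rw [Finset.HasAntidiagonal.mem_antidiagonal] at hab
      rcases Nat.eq_zero_or_pos b with hb | hb
      · subst hb
        rw [hF, mul_zero]
      · have ha : a < i := by omega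
        rw [ih a ha, zero_mul]

lemma coeff_geomS_zero {F : KSer k A} :
    PowerSeries.coeff (R := KAlg k A) 0 (geomS F) = 1 := by
  simp [geomS]

lemma coeff_geomS_succ {F : KSer k A} (hF : PowerSeries.coeff (R := KAlg k A) 0 F = 0)
    (n : ℕ) (hn : 1 ≤ n) :
    PowerSeries.coeff (R := KAlg k A) n (geomS F)
      = ∑ m ∈ Finset.Icc 1 n, PowerSeries.coeff (R := KAlg k A) m F *
          PowerSeries.coeff (R := KAlg k A) (n-m) (geomS F) := by
  rw [geomS, PowerSeries.coeff_mk, Finset.sum_range_succ']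
  have h0 : PowerSeries.coeff (R := KAlg k A) n ((F : KSer k A) ^ 0) = 0 := by
    rw [pow_zero, PowerSeries.coeff_one, if_neg (by omega)]
  rw [h0, add_zero]
  have hterm : ∀ i, PowerSeries.coeff (R := KAlg k A) n (F ^ (i+1))
      = ∑ m ∈ Finset.range (n+1),
          PowerSeries.coeff (R := KAlg k A) m F * PowerSeries.coeff (R := KAlg k A) (n-m) (F ^ i) := by
    intro i
    rw [pow_succ']
    rw [PowerSeries.coeff_mul, Finset.Nat.sum_antidiagonal_eq_sum_range_succ_mk]
  calc
    ∑ i ∈ Finset.range n, PowerSeries.coeff (R := KAlg k A) n (F ^ (i+1))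
      = ∑ i ∈ Finset.range n, ∑ m ∈ Finset.range (n+1),
          PowerSeries.coeff (R := KAlg k A) m F * PowerSeries.coeff (R := KAlg k A) (n-m) (F ^ i) :=
        Finset.sum_congr rfl fun i _ => hterm i
    _ = ∑ m ∈ Finset.range (n+1), ∑ i ∈ Finset.range n,
          PowerSeries.coeff (R := KAlg k A) m F * PowerSeries.coeff (R := KAlg k A) (n-m) (F ^ i) :=
        Finset.sum_comm
    _ = ∑ m ∈ Finset.Icc 1 n, ∑ i ∈ Finset.range n,
          PowerSeries.coeff (R := KAlg k A) m F * PowerSeries.coeff (R := KAlg k A) (n-m) (F ^ i) := by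
        rw [sum_range_succ_bot]
        rw [hF]
        simp
    _ = ∑ m ∈ Finset.Icc 1 n, PowerSeries.coeff (R := KAlg k A) m F *
          PowerSeries.coeff (R := KAlg k A) (n-m) (geomS F) := by
        refine Finset.sum_congr rfl fun m hm => ?_
        have hm' := Finset.mem_Icc.1 hm
        rw [geomS, PowerSeries.coeff_mk, Finset.mul_sum]
        refine (Finset.sum_subset (Finset.range_subset_range.2 (by omega)) ?_).symm
        intro i _ hi
        rw [Finset.mem_range, not_lt] at hi
        rw [coeff_pow_eq_zero hF i (n-m) (by omega), mul_zero]

/-- The list of `kA`-coefficients of `λz` along a composition. -/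
def zl (l : List ℕ) : List (KA k A) := l.map (fun m => z (m-1))

lemma coeff_W (m : ℕ) : PowerSeries.coeff (R := KAlg k A) m (lamS (zSer z))
    = if m = 0 then 0 else incl (z (m-1)) := by
  simp [lamS, zSer]

lemma coeff_W_zero : PowerSeries.coeff (R := KAlg k A) 0 (lamS (zSer z)) = 0 := by
  simp [coeff_W]

lemma Sc_formula : ∀ n, PowerSeries.coeff (R := KAlg k A) n (geomS (lamS (zSer z)))
    = ∑ l ∈ comps n, iP (zl z l) := by
  intro n
  induction n using Nat.strong_induction_on with
  | _ n ih =>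
    rcases Nat.eq_zero_or_pos n with rfl | hn
    · rw [coeff_geomS_zero, comps_zero]
      simp [zl, iP]
    · rw [coeff_geomS_succ (coeff_W_zero z) n hn, sum_comps_pos n hn]
      refine Finset.sum_congr rfl fun m hm => ?_
      have hm' := Finset.mem_Icc.1 hm
      rw [coeff_W, if_neg (by omega), ih (n-m) (by omega), Finset.mul_sum]
      refine Finset.sum_congr rfl fun l' _ => ?_
      simp [zl, iP_cons]

end Chunk7

section Chunk8

variable {k A : Type*} [Field k] [CharZero k] [Countable A]
variable (d : KA k A →ₗ[k] KA k A →ₗ[k] KA k A) (c : ℕ → k) (z : ℕ → KA k A)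

lemma dm_word_word (u v : List A) : dm d (word u) (word v) = dmWord d u v := by
  have h1 : MonoidAlgebra.coeffLinearEquiv k (word u : KAlg k A)
      = Finsupp.single (FreeMonoid.ofList u) (1:k) := rfl
  rw [dm, LinearMap.comp_apply, LinearEquiv.coe_coe, h1]
  erw [Finsupp.lsum_single]
  rw [LinearMap.toSpanSingleton_apply, one_smul, liftW_word]
  simp

lemma dm_single_single (a b : A) :
    dm d (word [a]) (word [b])
      = incl (d (Finsupp.single a (1:k)) (Finsupp.single b (1:k))) := by
  rw [dm_word_word]
  show dmWord d [a] [b] = _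
  rw [dmWord]
  simp [word_nil]

lemma dm_word_one (u : List A) (hu : u ≠ []) : dm d (word u) (1 : KAlg k A) = word u := by
  rw [← word_nil, dm_word_word, dmWord]
  cases ht : u.getLast? with
  | none => exact absurd (List.getLast?_eq_none_iff.1 ht) hu
  | some b => rfl

lemma single_eq_smul (b : A) (r : k) :
    (Finsupp.single b r : KA k A) = r • Finsupp.single b (1:k) := by
  rw [Finsupp.smul_single, smul_eq_mul, mul_one]

lemma dm_incl_single_single (a b : A) :
    dm d (incl (Finsupp.single a (1:k))) (incl (Finsupp.single b (1:k)))
      = incl (d (Finsupp.single a (1:k)) (Finsupp.single b (1:k))) := by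
  rw [incl_single, incl_single, dm_single_single]

lemma dm_incl_single_one (b : A) :
    dm d (incl (Finsupp.single b (1:k))) (1 : KAlg k A) = incl (Finsupp.single b (1:k)) := by
  rw [incl_single]
  exact dm_word_one d [b] (by simp)

lemma dm_incl_single (a : A) : ∀ y : KA k A,
    dm d (incl (Finsupp.single a (1:k))) (incl y) = incl (d (Finsupp.single a (1:k)) y) := by
  intro y
  induction y using Finsupp.induction with
  | zero => simp
  | single_add b r f hbf hr ihy =>
      simp only [single_eq_smul b r, map_add, map_smul, ihy, dm_incl_single_single]

lemma dm_incl (x y : KA k A) : dm d (incl x) (incl y) = incl (d x y) := by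
  induction x using Finsupp.induction with
  | zero => simp
  | single_add b r f hbf hr ihx =>
      simp only [single_eq_smul b r, map_add, map_smul, LinearMap.add_apply,
        LinearMap.smul_apply, ihx, dm_incl_single]

lemma dm_incl_one (x : KA k A) : dm d (incl x) (1 : KAlg k A) = incl x := by
  induction x using Finsupp.induction with
  | zero => simp
  | single_add b r f hbf hr ihx =>
      simp only [single_eq_smul b r, map_add, map_smul, LinearMap.add_apply,
        LinearMap.smul_apply, ihx, dm_incl_single_one]

/-- `d`-fold of a cons via associativity. -/
lemma d_chP (hd_assoc : ∀ x y w : KA k A, d (d x y) w = d x (d y w))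
    (x : KA k A) (L : List (KA k A)) (hL : L ≠ []) :
    d x (chP d L) = chP d (x :: L) := by
  cases L with
  | nil => exact absurd rfl hL
  | cons y t =>
      rw [chP_cons, chP_cons, List.foldl_cons]
      clear hL
      induction t generalizing y with
      | nil => rfl
      | cons u t iht =>
          rw [List.foldl_cons, List.foldl_cons, hd_assoc]
          exact iht (d y u)

/-- Length-refined compositions. -/
def compsL : ℕ → ℕ → Finset (List ℕ)
  | 0, p => if p = 0 then {[]} else ∅
  | (j+1), p => (Finset.range p).biUnion fun q => (compsL j q).image (fun l => (p - q) :: l)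

lemma mem_compsL : ∀ (j p : ℕ) (l : List ℕ),
    l ∈ compsL j p ↔ l.sum = p ∧ l.length = j ∧ ∀ i ∈ l, 0 < i := by
  intro j
  induction j with
  | zero =>
      intro p l
      by_cases hp : p = 0
      · subst hp
        rw [compsL, if_pos rfl]
        simp only [Finset.mem_singleton]
        constructor
        · rintro rfl; exact ⟨rfl, rfl, by simp⟩
        · rintro ⟨hs, hl, _⟩; exact List.length_eq_zero_iff.1 hl
      · rw [compsL, if_neg hp]
        simp only [Finset.notMem_empty, false_iff]
        rintro ⟨hs, hl, _⟩
        exact hp (by rw [← hs, List.length_eq_zero_iff.1 hl]; rfl)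
  | succ j ihj =>
      intro p l
      rw [compsL]
      simp only [Finset.mem_biUnion, Finset.mem_image, Finset.mem_range]
      constructor
      · rintro ⟨q, hq, l', hl', rfl⟩
        rw [ihj q l'] at hl'
        obtain ⟨hs, hl, hp⟩ := hl'
        refine ⟨by simp [hs]; omega, by simp [hl], ?_⟩
        intro i hi
        rcases List.mem_cons.1 hi with rfl | hi
        · omega
        · exact hp i hi
      · rintro ⟨hs, hl, hp⟩
        cases l with
        | nil => simp at hl
        | cons m t =>
            have hm : 0 < m := hp m (by simp)
            have hms : m + t.sum = p := by simpa using hs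
            refine ⟨t.sum, by omega, t, ?_, ?_⟩
            · rw [ihj]
              exact ⟨rfl, by simpa using hl, fun i hi => hp i (by simp [hi])⟩
            · congr 1; omega

lemma sum_compsL_succ {M : Type*} [AddCommMonoid M] (j p : ℕ) (f : List ℕ → M) :
    ∑ l ∈ compsL (j+1) p, f l
      = ∑ i ∈ Finset.Icc 1 p, ∑ l' ∈ compsL j (p-i), f (i :: l') := by
  rw [compsL]
  rw [Finset.sum_biUnion (by
    intro q hq q' hq' hqq'
    simp only [Finset.coe_range, Set.mem_Iio] at hq hq'
    simp only [Function.onFun]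
    rw [Finset.disjoint_left]
    intro l hl hl'
    simp only [Finset.mem_image] at hl hl'
    obtain ⟨l1, _, rfl⟩ := hl
    obtain ⟨l2, _, h2⟩ := hl'
    have hh : p - q' = p - q := (List.cons.injEq _ _ _ _ ▸ h2).1
    exact hqq' (by omega))]
  have h1 : ∀ q ∈ Finset.range p,
      (∑ l ∈ (compsL j q).image (fun l => (p - q) :: l), f l)
        = ∑ l' ∈ compsL j q, f ((p-q) :: l') := by
    intro q _
    refine Finset.sum_image ?_
    intro x _ y _ hxy
    exact (List.cons.injEq _ _ _ _ ▸ hxy).2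
  rw [Finset.sum_congr rfl h1]
  rw [show Finset.range p = Finset.image (fun i => p - i) (Finset.Icc 1 p) by
    ext x
    simp only [Finset.mem_range, Finset.mem_image, Finset.mem_Icc]
    constructor
    · intro hx; exact ⟨p - x, by omega, by omega⟩
    · rintro ⟨i, hi, rfl⟩; omega]
  rw [Finset.sum_image (by
    intro x hx y hy hxy
    simp only [Finset.coe_Icc, Set.mem_Icc, Finset.mem_Icc] at hx hy hxy
    omega)]
  refine Finset.sum_congr rfl fun i hi => ?_
  simp only [Finset.mem_Icc] at hi
  rw [show p - (p - i) = i by omega]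

end Chunk8

section Chunk9

variable {k A : Type*} [Field k] [CharZero k] [Countable A]
variable (d : KA k A →ₗ[k] KA k A →ₗ[k] KA k A) (c : ℕ → k) (z : ℕ → KA k A)

lemma chP_nil : chP d ([] : List (KA k A)) = 0 := rfl

lemma chP_singleton (x : KA k A) : chP d [x] = x := rfl

lemma coeff_mul2S (m : KAlg k A →ₗ[k] KAlg k A →ₗ[k] KAlg k A) (F G : KSer k A) (p : ℕ) :
    PowerSeries.coeff (R := KAlg k A) p (mul2S m F G)
      = ∑ i ∈ Finset.range (p+1),
          m (PowerSeries.coeff (R := KAlg k A) i F) (PowerSeries.coeff (R := KAlg k A) (p-i) G) := by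
  simp [mul2S]

lemma compsL_one_zero : compsL 1 0 = (∅ : Finset (List ℕ)) := by
  rw [Finset.eq_empty_iff_forall_notMem]
  intro l hl
  rw [mem_compsL] at hl
  obtain ⟨hs, hl1, hp⟩ := hl
  cases l with
  | nil => simp at hl1
  | cons a t =>
      have ha := hp a (by simp)
      have ht : t = [] := by
        cases t with
        | nil => rfl
        | cons b u => simp at hl1
      subst ht
      simp at hs
      omega

lemma compsL_one_pos (p : ℕ) (hp : 1 ≤ p) : compsL 1 p = {[p]} := by
  ext l
  rw [mem_compsL, Finset.mem_singleton]
  constructor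
  · rintro ⟨hs, hl1, hpos⟩
    cases l with
    | nil => simp at hl1
    | cons a t =>
        have ht : t = [] := by
          cases t with
          | nil => rfl
          | cons b u => simp at hl1
        subst ht
        simp at hs
        rw [hs]
  · rintro rfl
    exact ⟨by simp, rfl, by simp; omega⟩

lemma coeff_powS_dm (hd_assoc : ∀ x y w : KA k A, d (d x y) w = d x (d y w)) :
    ∀ (j p : ℕ),
    PowerSeries.coeff (R := KAlg k A) p (powS (dm d) (lamS (zSer z)) (j+1))
      = ∑ l ∈ compsL (j+1) p, incl (chP d (zl z l)) := by
  intro j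
  induction j with
  | zero =>
      intro p
      rw [powS, coeff_mul2S]
      rw [Finset.sum_eq_single_of_mem p (Finset.self_mem_range_succ p) (by
        intro b hb hbp
        rw [Finset.mem_range] at hb
        have hne : ¬ (p - b = 0) := by omega
        rw [show powS (dm d) (lamS (zSer z)) 0 = 1 from rfl, PowerSeries.coeff_one,
          if_neg hne, map_zero])]
      rw [show powS (dm d) (lamS (zSer z)) 0 = 1 from rfl, Nat.sub_self,
        PowerSeries.coeff_one, if_pos rfl]
      rcases Nat.eq_zero_or_pos p with rfl | hp
      · rw [coeff_W_zero, map_zero, LinearMap.zero_apply, compsL_one_zero, Finset.sum_empty]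
      · rw [coeff_W z p, if_neg (by omega), dm_incl_one, compsL_one_pos p hp,
          Finset.sum_singleton]
        rw [show zl z [p] = [z (p-1)] from rfl, chP_singleton]
  | succ j ihj =>
      intro p
      rw [powS, coeff_mul2S, sum_range_succ_bot]
      rw [coeff_W_zero, map_zero, LinearMap.zero_apply, zero_add]
      rw [sum_compsL_succ]
      refine Finset.sum_congr rfl fun i hi => ?_
      have hi' := Finset.mem_Icc.1 hi
      rw [coeff_W z i, if_neg (by omega), ihj (p - i), map_sum]
      refine Finset.sum_congr rfl fun l' hl' => ?_
      have hl'' := (mem_compsL (j+1) (p-i) l').1 hl'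
      have hne : zl z l' ≠ [] := by
        rw [zl]
        simp only [ne_eq, List.map_eq_nil_iff]
        intro h
        rw [h] at hl''
        simp at hl''
      rw [dm_incl, d_chP d hd_assoc _ _ hne]
      rfl

lemma length_le_sum (l : List ℕ) (h : ∀ i ∈ l, 0 < i) : l.length ≤ l.sum := by
  induction l with
  | nil => simp
  | cons a t ih =>
      have ha := h a (by simp)
      have := ih (fun i hi => h i (by simp [hi]))
      simp only [List.length_cons, List.sum_cons]
      omega

lemma comps_partition {M : Type*} [AddCommMonoid M] (p : ℕ) (hp : 1 ≤ p)
    (f : List ℕ → M) :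
    ∑ l ∈ comps p, f l = ∑ j ∈ Finset.Icc 1 p, ∑ l ∈ compsL j p, f l := by
  rw [show comps p = (Finset.Icc 1 p).biUnion (fun j => compsL j p) by
    ext l
    simp only [Finset.mem_biUnion, mem_comps, mem_compsL, Finset.mem_Icc]
    constructor
    · rintro ⟨hs, hpos⟩
      refine ⟨l.length, ⟨?_, ?_⟩, hs, rfl, hpos⟩
      · cases l with
        | nil => rw [List.sum_nil] at hs; omega
        | cons a t => simp
      · calc l.length ≤ l.sum := length_le_sum l hpos
          _ = p := hs
    · rintro ⟨j, _, hs, _, hpos⟩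
      exact ⟨hs, hpos⟩]
  rw [Finset.sum_biUnion]
  intro j hj j' hj' hjj'
  simp only [Function.onFun]
  rw [Finset.disjoint_left]
  intro l hl hl'
  rw [mem_compsL] at hl hl'
  exact hjj' (hl.2.1 ▸ hl'.2.1 ▸ rfl)

lemma coeff_G_zero :
    PowerSeries.coeff (R := KAlg k A) 0 (fDiamondS d c (lamS (zSer z))) = 0 := by
  simp [fDiamondS]

lemma Gc_formula (hd_assoc : ∀ x y w : KA k A, d (d x y) w = d x (d y w)) (p : ℕ) :
    PowerSeries.coeff (R := KAlg k A) p (fDiamondS d c (lamS (zSer z)))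
      = ∑ l ∈ comps p, c l.length • incl (chP d (zl z l)) := by
  rcases Nat.eq_zero_or_pos p with rfl | hp
  · rw [coeff_G_zero, comps_zero, Finset.sum_singleton]
    rw [show zl z [] = [] from rfl, chP_nil, map_zero, smul_zero]
  · rw [fDiamondS, PowerSeries.coeff_mk, comps_partition p hp]
    refine Finset.sum_congr rfl fun j hj => ?_
    have hj' := Finset.mem_Icc.1 hj
    obtain ⟨j', rfl⟩ : ∃ j', j = j' + 1 := ⟨j - 1, by omega⟩
    rw [coeff_powS_dm d z hd_assoc j' p, Finset.smul_sum]
    refine Finset.sum_congr rfl fun l hl => ?_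
    rw [((mem_compsL (j'+1) p l).1 hl).2.1]

end Chunk9

section Chunk10

variable {k A : Type*} [Field k] [CharZero k] [Countable A]
variable (d : KA k A →ₗ[k] KA k A →ₗ[k] KA k A) (c : ℕ → k) (z : ℕ → KA k A)

lemma master (hd_assoc : ∀ x y w : KA k A, d (d x y) w = d x (d y w)) :
    ∀ n : ℕ, Psi d c (PowerSeries.coeff (R := KAlg k A) n (geomS (lamS (zSer z))))
      = PowerSeries.coeff (R := KAlg k A) n (geomS (fDiamondS d c (lamS (zSer z)))) := by
  intro n
  induction n using Nat.strong_induction_on with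
  | _ n ih =>
    rcases Nat.eq_zero_or_pos n with rfl | hn
    · rw [coeff_geomS_zero, coeff_geomS_zero, Psi_one]
    · rw [Sc_formula, map_sum]
      have step1 : ∀ l ∈ comps n, Psi d c (iP (zl z l))
          = ∑ j ∈ Finset.Icc 1 l.length,
              c ((l.take j).length) •
                (incl (chP d (zl z (l.take j))) * Psi d c (iP (zl z (l.drop j)))) := by
        intro l hl
        have hlne : l ≠ [] := by
          rintro rfl
          rw [mem_comps] at hl
          simp at hl
          omega
        have hzlne : zl z l ≠ [] := by
          simp only [zl, ne_eq, List.map_eq_nil_iff]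
          exact hlne
        rw [Psi_iP_split d c _ hzlne,
          show (zl z l).length = l.length by simp [zl]]
        refine Finset.sum_congr rfl fun j hj => ?_
        have hj' := Finset.mem_Icc.1 hj
        rw [zterm,
          show (zl z l).take j = zl z (l.take j) by simp [zl, List.map_take],
          show (zl z l).drop j = zl z (l.drop j) by simp [zl, List.map_drop],
          show (l.take j).length = j by rw [List.length_take]; omega]
      rw [Finset.sum_congr rfl step1]
      rw [split_sum n
        (fun l₁ l₂ => c l₁.length • (incl (chP d (zl z l₁)) * Psi d c (iP (zl z l₂))))]
      rw [coeff_geomS_succ (coeff_G_zero d c z) n hn]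
      refine Finset.sum_congr rfl fun q hq => ?_
      have hq' := Finset.mem_Icc.1 hq
      rw [Gc_formula d c z hd_assoc q, ← ih (n - q) (by omega), Sc_formula, map_sum,
        Finset.sum_mul]
      refine Finset.sum_congr rfl fun l₁ _ => ?_
      rw [smul_mul_assoc, Finset.mul_sum, Finset.smul_sum]

end Chunk10


/-- Theorem 5.1 of Hoffman–Ihara: for any `f ∈ t·k[[t]]` and any
`z ∈ kA[[λ]]`, `Ψ_f(1/(1-λz)) = 1/(1-f_⋄(λz))` in `k⟨A⟩[[λ]]`, `Ψ_f` being applied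
coefficientwise. -/
theorem Psi_geometric_series
    {k A : Type*} [Field k] [CharZero k] [Countable A]
    (d : KA k A →ₗ[k] KA k A →ₗ[k] KA k A)
    (hd_comm : ∀ x y, d x y = d y x)
    (hd_assoc : ∀ x y z, d (d x y) z = d x (d y z))
    (c : ℕ → k) (hc0 : c 0 = 0) (z : ℕ → KA k A) :
    mapS (Psi d c) (geomS (lamS (zSer z))) = geomS (fDiamondS d c (lamS (zSer z))) := by
  refine PowerSeries.ext fun n => ?_
  rw [mapS, PowerSeries.coeff_mk]
  exact master d c z hd_assoc n

end QuasiShuffle
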